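/- Let β ∈ ℝ and let p, q : ℝ → ℂ with p differentiable and 4|p(t)|² < β² for all t ∈ ℝ; set Ω(t) := √(β² − 4|p(t)|²) (the positive real square root). For t ∈ ℝ and λ ∈ ℂ define the 2×2 matrices V(t,λ) with entries V₁₁ = (i/2)λ² − i|p(t)|², V₁₂ = conj(p(t))·λ + i·conj(q(t)), V₂₁ = −p(t)·λ + i·q(t), V₂₂ = −(i/2)λ² + i|p(t)|², and K(t,λ) with entries K₁₁ = λ − iΩ(t), K₁₂ = 2i·conj(p(t)), K₂₁ = 2i·p(t), K₂₂ = λ + iΩ(t). Then ∂_t K(t,λ) = V(t,λ)·K(t,λ) − K(t,λ)·V(t,−λ) for all λ ∈ ℂ and all t ∈ ℝ if and only if p′(t) = 2i|p(t)|²·p(t) − i·Ω(t)·q(t) for all t ∈ ℝ. -/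

import Mathlib

open Complex Matrix ComplexConjugate

noncomputable section

/-- The time-part Lax matrix `V(t,λ)` of the NLS equation evaluated at `x = 0`, where
`p(t) = u(0,t)` and `q(t) = uₓ(0,t)`. -/
def Vbdry (p q : ℝ → ℂ) (t : ℝ) (lam : ℂ) : Matrix (Fin 2) (Fin 2) ℂ :=
  !![(I / 2) * lam ^ 2 - I * (‖p t‖ : ℂ) ^ 2, conj (p t) * lam + I * conj (q t);
     -(p t) * lam + I * q t, -((I / 2) * lam ^ 2) + I * (‖p t‖ : ℂ) ^ 2]

/-- `Ω(t) = √(β² − 4|p(t)|²)`. -/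
def Omega1 (β : ℝ) (p : ℝ → ℂ) (t : ℝ) : ℝ :=
  Real.sqrt (β ^ 2 - 4 * ‖p t‖ ^ 2)

/-- The dynamical boundary matrix `K(t,λ)` with entries `K₁₁ = λ − iΩ(t)`,
`K₁₂ = 2i conj(p(t))`, `K₂₁ = 2i p(t)`, `K₂₂ = λ + iΩ(t)`. -/
def Kdyn (β : ℝ) (p : ℝ → ℂ) (t : ℝ) (lam : ℂ) : Matrix (Fin 2) (Fin 2) ℂ :=
  !![lam - I * ((Omega1 β p t : ℝ) : ℂ), 2 * I * conj (p t);
     2 * I * p t, lam + I * ((Omega1 β p t : ℝ) : ℂ)]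

lemma hda_conj {f : ℝ → ℂ} {f' : ℂ} {x : ℝ} (hf : HasDerivAt f f' x) :
    HasDerivAt (fun s => (starRingEnd ℂ) (f s)) ((starRingEnd ℂ) f') x := by
  simpa [Function.comp_def] using (Complex.conjCLE.toContinuousLinearMap.hasFDerivAt.comp_hasDerivAt x hf)

lemma hda_re {f : ℝ → ℂ} {f' : ℂ} {x : ℝ} (hf : HasDerivAt f f' x) :
    HasDerivAt (fun s => (f s).re) f'.re x := by
  simpa [Function.comp_def] using (Complex.reCLM.hasFDerivAt.comp_hasDerivAt x hf)

lemma hda_im {f : ℝ → ℂ} {f' : ℂ} {x : ℝ} (hf : HasDerivAt f f' x) :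
    HasDerivAt (fun s => (f s).im) f'.im x := by
  simpa [Function.comp_def] using (Complex.imCLM.hasFDerivAt.comp_hasDerivAt x hf)


set_option maxHeartbeats 1000000 in
/-- The boundary equation `∂ₜK(t,λ) = V(t,λ)K(t,λ) − K(t,λ)V(t,−λ)` holds for all `λ`
and `t` if and only if the new boundary condition `p′(t) = 2i|p(t)|²p(t) − iΩ(t)q(t)`
holds for all `t`. -/
theorem dynamical_boundary_condition (β : ℝ) (p q : ℝ → ℂ)
    (hp : Differentiable ℝ p) (hβ : ∀ t : ℝ, 4 * ‖p t‖ ^ 2 < β ^ 2) :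
    (∀ (t : ℝ) (lam : ℂ) (i j : Fin 2),
        HasDerivAt (fun s => Kdyn β p s lam i j)
          ((Vbdry p q t lam * Kdyn β p t lam - Kdyn β p t lam * Vbdry p q t (-lam)) i j) t)
      ↔ (∀ t : ℝ,
          deriv p t
            = 2 * I * (‖p t‖ : ℂ) ^ 2 * p t - I * ((Omega1 β p t : ℝ) : ℂ) * q t) := by
  constructor
  · intro h t
    have h2 : HasDerivAt (fun s => Kdyn β p s 0 1 0) (2 * I * deriv p t) t := by
      simpa [Kdyn] using ((hp t).hasDerivAt.const_mul (2 * I))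
    have hu := h2.unique (h t 0 1 0)
    simp [Vbdry, Kdyn, Matrix.mul_apply, Fin.sum_univ_two] at hu
    have key : 2 * I * deriv p t
        = 2 * I * (2 * I * (‖p t‖ : ℂ) ^ 2 * p t - I * ((Omega1 β p t : ℝ) : ℂ) * q t) := by
      rw [hu]
      ring
    exact mul_left_cancel₀ (by simp) key
  · intro hbc t lam i j
    have hWpos : 0 < Omega1 β p t := Real.sqrt_pos.2 (by linarith [hβ t])
    have hWne : Omega1 β p t ≠ 0 := ne_of_gt hWpos
    have hp' : HasDerivAt p
        (2 * I * (‖p t‖ : ℂ) ^ 2 * p t - I * ((Omega1 β p t : ℝ) : ℂ) * q t) t := by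
      have := (hp t).hasDerivAt
      rwa [hbc t] at this
    -- derivative of ‖p s‖ ^ 2
    have hNsq : HasDerivAt (fun s => ‖p s‖ ^ 2)
        (2 * Omega1 β p t * ((conj (p t) * q t).im)) t := by
      have h1 : (fun s => ‖p s‖ ^ 2) = fun s => (p s).re ^ 2 + (p s).im ^ 2 := by
        funext s
        rw [← Complex.normSq_eq_norm_sq, Complex.normSq_apply]
        ring
      rw [h1]
      have h2 := ((hda_re hp').pow 2).add ((hda_im hp').pow 2)
      refine HasDerivAt.congr_deriv h2 ?_
      simp [Complex.mul_re, Complex.mul_im, Complex.normSq_apply, ← Complex.ofReal_pow,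
        ← Complex.normSq_eq_norm_sq]
      ring
    have hΩ : HasDerivAt (fun s => Omega1 β p s) (-4 * ((conj (p t) * q t).im)) t := by
      have hg : HasDerivAt (fun s => β ^ 2 - 4 * ‖p s‖ ^ 2)
          (-(4 * (2 * Omega1 β p t * ((conj (p t) * q t).im)))) t :=
        (hNsq.const_mul 4).const_sub _
      have hgt : β ^ 2 - 4 * ‖p t‖ ^ 2 ≠ 0 := by nlinarith [hβ t]
      have h3 := hg.sqrt hgt
      have hsq : Real.sqrt (β ^ 2 - 4 * ‖p t‖ ^ 2) = Omega1 β p t := rfl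
      rw [hsq] at h3
      refine HasDerivAt.congr_deriv h3 ?_
      field_simp
    have hΩc : HasDerivAt (fun s => ((Omega1 β p s : ℝ) : ℂ))
        ((-4 * ((conj (p t) * q t).im) : ℝ) : ℂ) t := hΩ.ofReal_comp
    have hconj : conj (p t) * q t - p t * conj (q t)
        = 2 * (((conj (p t) * q t).im : ℝ) : ℂ) * I := by
      rw [show p t * conj (q t) = conj (conj (p t) * q t) by
        rw [_root_.map_mul, Complex.conj_conj]]
      simpa using Complex.sub_conj (conj (p t) * q t)
    have hsplit : ((p t).re : ℂ) * ((q t).im : ℂ) - ((p t).im : ℂ) * ((q t).re : ℂ)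
        = (((conj (p t) * q t).im : ℝ) : ℂ) := by
      have h5 : (conj (p t) * q t).im = (p t).re * (q t).im - (p t).im * (q t).re := by
        simp [Complex.mul_im]
        ring
      rw [h5]
      push_cast
      ring
    fin_cases i <;> fin_cases j
    · -- (0,0)
      have hf : HasDerivAt (fun s => Kdyn β p s lam 0 0)
          (-(I * ((-4 * ((conj (p t) * q t).im) : ℝ) : ℂ))) t := by
        simpa [Kdyn] using (hΩc.const_mul I).const_sub lam
      convert hf using 1
      · rfl
      simp [Vbdry, Kdyn, Matrix.mul_apply, Fin.sum_univ_two, Fin.zero_eta, Fin.mk_one]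
      push_cast
      linear_combination (-4 * I * (((conj (p t) * q t).im : ℝ) : ℂ)) * Complex.I_sq
        - (2 * I ^ 2) * hconj - (4 * I) * hsplit
    · -- (0,1)
      have hf : HasDerivAt (fun s => Kdyn β p s lam 0 1)
          (2 * I * conj (2 * I * (‖p t‖ : ℂ) ^ 2 * p t
            - I * ((Omega1 β p t : ℝ) : ℂ) * q t)) t := by
        simpa [Kdyn] using ((hda_conj hp').const_mul (2 * I))
      convert hf using 1
      · rfl
      simp [Vbdry, Kdyn, Matrix.mul_apply, Fin.sum_univ_two, Fin.zero_eta, Fin.mk_one, map_sub, _root_.map_mul,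
        map_pow, map_ofNat, Complex.conj_I, Complex.conj_ofReal]
      linear_combination (2 * conj (p t) * lam ^ 2) * Complex.I_sq
    · -- (1,0)
      have hf : HasDerivAt (fun s => Kdyn β p s lam 1 0)
          (2 * I * (2 * I * (‖p t‖ : ℂ) ^ 2 * p t
            - I * ((Omega1 β p t : ℝ) : ℂ) * q t)) t := by
        simpa [Kdyn] using (hp'.const_mul (2 * I))
      convert hf using 1
      · rfl
      simp [Vbdry, Kdyn, Matrix.mul_apply, Fin.sum_univ_two, Fin.zero_eta, Fin.mk_one]
      linear_combination (-2 * p t * lam ^ 2) * Complex.I_sq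
    · -- (1,1)
      have hf : HasDerivAt (fun s => Kdyn β p s lam 1 1)
          (I * ((-4 * ((conj (p t) * q t).im) : ℝ) : ℂ)) t := by
        simpa [Kdyn] using ((hΩc.const_mul I).const_add lam)
      convert hf using 1
      · rfl
      simp [Vbdry, Kdyn, Matrix.mul_apply, Fin.sum_univ_two, Fin.zero_eta, Fin.mk_one]
      push_cast
      linear_combination (4 * I * (((conj (p t) * q t).im : ℝ) : ℂ)) * Complex.I_sq
        + (2 * I ^ 2) * hconj + (4 * I) * hsplit
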